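/- Let X ∈ ℝ^{m×(d+1)} have full column rank, X = (y | X'), with exact OLS coefficients φ = (X'ᵀX')⁻¹X'ᵀy, exact residual r = y - X'φ, and approximate coefficients φ̃ ∈ ℝ^d with residual r̃ = y - X'φ̃. Suppose (i) ‖r̃‖ ≤ (1+ε)‖r‖, (ii) ‖φ - φ̃‖ ≤ √ε·η·‖φ‖ for constants ε ∈ (0,1), η ≥ 0, and define the approximate leverage scores ℓ̃(i) := ℓ_{X'}(i) + r̃(i)²/‖r̃‖². Then for every i, |ℓ_X(i) - ℓ̃(i)| ≤ (1 + 3·η·κ(X)²)·√ε·ℓ_X(i), where κ(X) is the spectral condition number of X. -/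

import Mathlib

open Matrix

/-!
The hat matrix `H = X (XᵀX)⁻¹ Xᵀ` is the orthogonal projection onto the column space of `X`.
Adjoining the column `y` to `X'` adds the projection onto the residual `r`, which gives the
recursion `ℓ_X(i) = ℓ_{X'}(i) + r(i)²/‖r‖²`, so the error to bound is
`r(i)²/‖r‖² - r̃(i)²/‖r̃‖²`. As `H` is a projection fixing `X`, `(Xu)(i)² ≤ ℓ_X(i) ‖Xu‖²` for
every `u`; this bounds `r(i)²`, `r̃(i)²` and `(r̃(i) - r(i))² = (X'(φ - φ̃))(i)²`. Pythagoras,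
`‖r̃‖² = ‖r‖² + ‖X'(φ - φ̃)‖²`, turns (i) into `‖r̃‖² - ‖r‖² ≤ √ε ‖r̃‖²`, and the Rayleigh bounds
`λ_min ‖u‖² ≤ ‖Xu‖² ≤ λ_max ‖u‖²` turn (ii) into `‖X'(φ - φ̃)‖² ≤ κ² ε η² ‖r‖²`. Elementary
algebra then gives the bound with `2κη` in place of `3κ²η`.
-/

namespace Matrix

variable {ι κ : Type*}

section Spectral

variable {n : Type*} [Fintype n] [DecidableEq n] {A : Matrix n n ℝ} (hA : A.IsHermitian)

lemma IsHermitian.dotProduct_mulVec_eq_sum_eigenvalues (v : n → ℝ) :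
    v ⬝ᵥ (A *ᵥ v) =
      ∑ j, hA.eigenvalues j * ((hA.eigenvectorUnitary : Matrix n n ℝ)ᵀ *ᵥ v) j ^ 2 := by
  conv_lhs => rw [hA.spectral_theorem, Unitary.conjStarAlgAut_apply]
  rw [← mulVec_mulVec, ← mulVec_mulVec, dotProduct_mulVec, star_eq_conjTranspose,
    conjTranspose_eq_transpose_of_trivial, ← mulVec_transpose]
  simp only [dotProduct, mulVec_diagonal, RCLike.ofReal_real_eq_id, Function.id_comp]
  exact Finset.sum_congr rfl fun j _ => by ring

lemma IsHermitian.sum_sq_transpose_eigenvectorUnitary_mulVec (v : n → ℝ) :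
    ∑ j, ((hA.eigenvectorUnitary : Matrix n n ℝ)ᵀ *ᵥ v) j ^ 2 = ∑ j, v j ^ 2 := by
  have hU := Unitary.mul_star_self_of_mem hA.eigenvectorUnitary.2
  rw [star_eq_conjTranspose, conjTranspose_eq_transpose_of_trivial] at hU
  have h : ((hA.eigenvectorUnitary : Matrix n n ℝ)ᵀ *ᵥ v) ⬝ᵥ
      ((hA.eigenvectorUnitary : Matrix n n ℝ)ᵀ *ᵥ v) = v ⬝ᵥ v := by
    rw [dotProduct_mulVec, ← mulVec_transpose, transpose_transpose, mulVec_mulVec, hU,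
      one_mulVec]
  simpa only [dotProduct, sq] using h

lemma IsHermitian.iInf_eigenvalues_mul_sum_sq_le (v : n → ℝ) :
    (⨅ j, hA.eigenvalues j) * ∑ j, v j ^ 2 ≤ v ⬝ᵥ (A *ᵥ v) := by
  rw [hA.dotProduct_mulVec_eq_sum_eigenvalues, ← hA.sum_sq_transpose_eigenvectorUnitary_mulVec,
    Finset.mul_sum]
  gcongr with j
  exact ciInf_le (Finite.bddBelow_range _) j

lemma IsHermitian.dotProduct_mulVec_le_iSup_eigenvalues_mul (v : n → ℝ) :
    v ⬝ᵥ (A *ᵥ v) ≤ (⨆ j, hA.eigenvalues j) * ∑ j, v j ^ 2 := by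
  rw [hA.dotProduct_mulVec_eq_sum_eigenvalues, ← hA.sum_sq_transpose_eigenvectorUnitary_mulVec,
    Finset.mul_sum]
  gcongr with j
  exact le_ciSup (Finite.bddAbove_range _) j

noncomputable def IsHermitian.conditionNumber : ℝ :=
  (⨆ j, hA.eigenvalues j) / ⨅ j, hA.eigenvalues j

lemma PosDef.iInf_eigenvalues_pos [Nonempty n] (hA : A.PosDef) :
    0 < ⨅ j, hA.isHermitian.eigenvalues j := by
  obtain ⟨j, hj⟩ := exists_eq_ciInf_of_finite (f := hA.isHermitian.eigenvalues)
  exact hj ▸ hA.eigenvalues_pos j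

lemma PosDef.one_le_conditionNumber [Nonempty n] (hA : A.PosDef) :
    1 ≤ hA.isHermitian.conditionNumber :=
  (one_le_div hA.iInf_eigenvalues_pos).mpr
    (ciInf_le_ciSup (Finite.bddBelow_range _) (Finite.bddAbove_range _))

lemma PosDef.iSup_eigenvalues_eq_conditionNumber_mul [Nonempty n] (hA : A.PosDef) :
    ⨆ j, hA.isHermitian.eigenvalues j =
      hA.isHermitian.conditionNumber * ⨅ j, hA.isHermitian.eigenvalues j :=
  (div_mul_cancel₀ _ hA.iInf_eigenvalues_pos.ne').symm

end Spectral

lemma dotProduct_transpose_mul_self_mulVec [Fintype ι] [Fintype κ] (M : Matrix ι κ ℝ)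
    (v : κ → ℝ) : v ⬝ᵥ ((Mᵀ * M) *ᵥ v) = ∑ t, (M *ᵥ v) t ^ 2 := by
  rw [← mulVec_mulVec, dotProduct_mulVec, ← mulVec_transpose, transpose_transpose]
  simp only [dotProduct, sq]

lemma linearIndependent_col_of_rank_eq [Fintype κ] {M : Matrix ι κ ℝ}
    (h : M.rank = Fintype.card κ) : LinearIndependent ℝ M.col :=
  linearIndependent_iff_card_eq_finrank_span.mpr (by rw [← h, rank_eq_finrank_span_cols]; rfl)

lemma posDef_transpose_mul_self [Fintype ι] [Fintype κ] {M : Matrix ι κ ℝ}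
    (hM : LinearIndependent ℝ M.col) : (Mᵀ * M).PosDef := by
  simpa using PosDef.conjTranspose_mul_self M (mulVec_injective_iff.mpr hM)

section HatMatrix

variable [Fintype ι] [Fintype κ] [DecidableEq κ]

noncomputable def hatMatrix (M : Matrix ι κ ℝ) : Matrix ι ι ℝ := M * (Mᵀ * M)⁻¹ * Mᵀ

noncomputable def leastSquares (M : Matrix ι κ ℝ) (y : ι → ℝ) : κ → ℝ :=
  (Mᵀ * M)⁻¹ *ᵥ (Mᵀ *ᵥ y)

noncomputable def leastSquaresResidual (M : Matrix ι κ ℝ) (y : ι → ℝ) : ι → ℝ :=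
  y - M *ᵥ leastSquares M y

lemma hatMatrix_transpose (M : Matrix ι κ ℝ) : (hatMatrix M)ᵀ = hatMatrix M := by
  simp only [hatMatrix, transpose_mul, transpose_transpose, transpose_nonsing_inv,
    Matrix.mul_assoc]

variable {M : Matrix ι κ ℝ} (hM : LinearIndependent ℝ M.col)
include hM

lemma hatMatrix_mul_self : hatMatrix M * M = M := by
  rw [hatMatrix, Matrix.mul_assoc (M * _), Matrix.mul_assoc M, nonsing_inv_mul _
    ((isUnit_iff_isUnit_det _).mp (posDef_transpose_mul_self hM).isUnit), Matrix.mul_one]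

lemma hatMatrix_mul_hatMatrix : hatMatrix M * hatMatrix M = hatMatrix M := by
  nth_rewrite 2 [hatMatrix]
  rw [← Matrix.mul_assoc, ← Matrix.mul_assoc, hatMatrix_mul_self hM, hatMatrix]

lemma hatMatrix_apply_self (i : ι) : hatMatrix M i i = ∑ t, hatMatrix M i t ^ 2 := by
  conv_lhs => rw [← hatMatrix_mul_hatMatrix hM]
  rw [mul_apply]
  refine Finset.sum_congr rfl fun t _ => ?_
  rw [sq, ← transpose_apply (hatMatrix M) t i, hatMatrix_transpose]

lemma hatMatrix_apply_self_nonneg (i : ι) : 0 ≤ hatMatrix M i i := by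
  rw [hatMatrix_apply_self hM]
  positivity

lemma sq_mulVec_apply_le_hatMatrix_mul (u : κ → ℝ) (i : ι) :
    (M *ᵥ u) i ^ 2 ≤ hatMatrix M i i * ∑ t, (M *ᵥ u) t ^ 2 := by
  have h : M *ᵥ u = hatMatrix M *ᵥ (M *ᵥ u) := by rw [mulVec_mulVec, hatMatrix_mul_self hM]
  rw [hatMatrix_apply_self hM]
  conv_lhs => rw [h]
  exact Finset.sum_mul_sq_le_sq_mul_sq _ _ _

lemma hatMatrix_eq_of_mul_eq {P : Matrix ι ι ℝ} {N : Matrix κ ι ℝ} (hPt : Pᵀ = P)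
    (hPM : P * M = M) (hPN : P = M * N) : hatMatrix M = P := by
  have hMP : Mᵀ * P = Mᵀ := by rw [← hPt, ← transpose_mul, hPM]
  calc hatMatrix M = hatMatrix M * P := by rw [hatMatrix, Matrix.mul_assoc _ Mᵀ, hMP]
    _ = P := by rw [hPN, ← Matrix.mul_assoc, hatMatrix_mul_self hM]

lemma transpose_mulVec_leastSquaresResidual (y : ι → ℝ) :
    Mᵀ *ᵥ leastSquaresResidual M y = 0 := by
  rw [leastSquaresResidual, leastSquares, mulVec_sub, mulVec_mulVec, mulVec_mulVec,
    mul_nonsing_inv _ ((isUnit_iff_isUnit_det _).mp (posDef_transpose_mul_self hM).isUnit),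
    one_mulVec, sub_self]

lemma sum_sq_sub_mulVec_eq (y : ι → ℝ) (w : κ → ℝ) :
    ∑ t, (y - M *ᵥ w) t ^ 2 =
      ∑ t, leastSquaresResidual M y t ^ 2 + ∑ t, (M *ᵥ (leastSquares M y - w)) t ^ 2 := by
  set r := leastSquaresResidual M y
  have hsplit : y - M *ᵥ w = r + M *ᵥ (leastSquares M y - w) := by
    rw [mulVec_sub]; simp only [r, leastSquaresResidual]; abel
  have horth : ∑ t, r t * (M *ᵥ (leastSquares M y - w)) t = 0 := by
    change r ⬝ᵥ _ = 0
    rw [dotProduct_mulVec, ← mulVec_transpose, transpose_mulVec_leastSquaresResidual hM,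
      zero_dotProduct]
  simp only [hsplit, Pi.add_apply, add_sq, Finset.sum_add_distrib, mul_assoc, ← Finset.mul_sum,
    horth, mul_zero, add_zero]

lemma sum_sq_leastSquaresResidual_le (y : ι → ℝ) (w : κ → ℝ) :
    ∑ t, leastSquaresResidual M y t ^ 2 ≤ ∑ t, (y - M *ᵥ w) t ^ 2 := by
  rw [sum_sq_sub_mulVec_eq hM]
  exact le_add_of_nonneg_right (by positivity)

end HatMatrix

lemma linearIndependent_col_submatrix_succ {k : ℕ} {X : Matrix ι (Fin (k + 1)) ℝ}
    (hX : LinearIndependent ℝ X.col) : LinearIndependent ℝ (X.submatrix id Fin.succ).col :=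
  hX.comp Fin.succ (Fin.succ_injective _)

section LeverageRecursion

variable {k : ℕ} (X : Matrix ι (Fin (k + 1)) ℝ)

lemma mulVec_fin_cons (c : ℝ) (w : Fin k → ℝ) :
    X *ᵥ Fin.cons c w = c • X.col 0 + X.submatrix id Fin.succ *ᵥ w := by
  ext i
  simp [mulVec, dotProduct, Fin.sum_univ_succ, mul_comm]

lemma col_zero_sub_submatrix_succ_mulVec (w : Fin k → ℝ) :
    X.col 0 - X.submatrix id Fin.succ *ᵥ w = X *ᵥ Fin.cons 1 (-w) := by
  rw [mulVec_fin_cons, one_smul, mulVec_neg, sub_eq_add_neg]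

lemma submatrix_succ_mulVec (w : Fin k → ℝ) :
    X.submatrix id Fin.succ *ᵥ w = X *ᵥ Fin.cons 0 w := by
  rw [mulVec_fin_cons, zero_smul, zero_add]

variable [Fintype ι]

lemma iInf_eigenvalues_mul_le_sum_sq_col_zero_sub (hH : (Xᵀ * X).IsHermitian) (w : Fin k → ℝ) :
    (⨅ j, hH.eigenvalues j) * (1 + ∑ j, w j ^ 2) ≤
      ∑ t, (X.col 0 - X.submatrix id Fin.succ *ᵥ w) t ^ 2 := by
  have h := hH.iInf_eigenvalues_mul_sum_sq_le (Fin.cons 1 (-w))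
  rw [dotProduct_transpose_mul_self_mulVec, ← col_zero_sub_submatrix_succ_mulVec,
    Fin.sum_univ_succ] at h
  simpa using h

lemma sum_sq_submatrix_succ_mulVec_le (hH : (Xᵀ * X).IsHermitian) (w : Fin k → ℝ) :
    ∑ t, (X.submatrix id Fin.succ *ᵥ w) t ^ 2 ≤ (⨆ j, hH.eigenvalues j) * ∑ j, w j ^ 2 := by
  have h := hH.dotProduct_mulVec_le_iSup_eigenvalues_mul (Fin.cons 0 w)
  rw [dotProduct_transpose_mul_self_mulVec, ← submatrix_succ_mulVec, Fin.sum_univ_succ] at h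
  simpa using h

variable {X} (hX : LinearIndependent ℝ X.col)
include hX

lemma sum_sq_leastSquaresResidual_pos :
    0 < ∑ t, leastSquaresResidual (X.submatrix id Fin.succ) (X.col 0) t ^ 2 := by
  obtain ⟨t, ht⟩ : ∃ t, leastSquaresResidual (X.submatrix id Fin.succ) (X.col 0) t ≠ 0 := by
    by_contra! h
    have h0 : X *ᵥ Fin.cons 1 (-leastSquares (X.submatrix id Fin.succ) (X.col 0)) = X *ᵥ 0 := by
      rw [← col_zero_sub_submatrix_succ_mulVec, mulVec_zero]
      exact funext h
    simpa using congrFun (mulVec_injective_iff.mpr hX h0) 0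
  exact Finset.sum_pos' (fun _ _ => sq_nonneg _) ⟨t, Finset.mem_univ _, by positivity⟩

lemma sq_col_zero_sub_submatrix_succ_mulVec_apply_le (w : Fin k → ℝ) (i : ι) :
    (X.col 0 - X.submatrix id Fin.succ *ᵥ w) i ^ 2 ≤
      hatMatrix X i i * ∑ t, (X.col 0 - X.submatrix id Fin.succ *ᵥ w) t ^ 2 := by
  rw [col_zero_sub_submatrix_succ_mulVec]
  exact sq_mulVec_apply_le_hatMatrix_mul hX _ i

lemma sq_submatrix_succ_mulVec_apply_le (w : Fin k → ℝ) (i : ι) :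
    (X.submatrix id Fin.succ *ᵥ w) i ^ 2 ≤
      hatMatrix X i i * ∑ t, (X.submatrix id Fin.succ *ᵥ w) t ^ 2 := by
  rw [submatrix_succ_mulVec]
  exact sq_mulVec_apply_le_hatMatrix_mul hX _ i

lemma sum_sq_submatrix_succ_mulVec_le_of_sum_sq_le (hH : (Xᵀ * X).IsHermitian) {w : Fin k → ℝ}
    {c : ℝ}
    (hw : ∑ j, w j ^ 2 ≤ c ^ 2 * ∑ j, leastSquares (X.submatrix id Fin.succ) (X.col 0) j ^ 2) :
    ∑ t, (X.submatrix id Fin.succ *ᵥ w) t ^ 2 ≤ hH.conditionNumber * c ^ 2 *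
      ∑ t, leastSquaresResidual (X.submatrix id Fin.succ) (X.col 0) t ^ 2 := by
  set φ := leastSquares (X.submatrix id Fin.succ) (X.col 0)
  have hpd := posDef_transpose_mul_self hX
  have hlmin : 0 < ⨅ j, hH.eigenvalues j := hpd.iInf_eigenvalues_pos
  have hφ : (⨅ j, hH.eigenvalues j) * (1 + ∑ j, φ j ^ 2) ≤
      ∑ t, leastSquaresResidual (X.submatrix id Fin.succ) (X.col 0) t ^ 2 :=
    iInf_eigenvalues_mul_le_sum_sq_col_zero_sub X hH φ
  calc ∑ t, (X.submatrix id Fin.succ *ᵥ w) t ^ 2 ≤ (⨆ j, hH.eigenvalues j) * ∑ j, w j ^ 2 :=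
        sum_sq_submatrix_succ_mulVec_le X hH w
    _ ≤ (⨆ j, hH.eigenvalues j) * (c ^ 2 * ∑ j, φ j ^ 2) :=
        mul_le_mul_of_nonneg_left hw (hlmin.trans_le
          (ciInf_le_ciSup (Finite.bddBelow_range _) (Finite.bddAbove_range _))).le
    _ = hH.conditionNumber * c ^ 2 * ((⨅ j, hH.eigenvalues j) * ∑ j, φ j ^ 2) := by
        rw [hpd.iSup_eigenvalues_eq_conditionNumber_mul]; ring
    _ ≤ _ := by
        gcongr
        · exact mul_nonneg (zero_le_one.trans hpd.one_le_conditionNumber) (sq_nonneg c)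
        · linarith

theorem hatMatrix_eq_hatMatrix_submatrix_succ_add :
    hatMatrix X = hatMatrix (X.submatrix id Fin.succ) +
      (∑ t, leastSquaresResidual (X.submatrix id Fin.succ) (X.col 0) t ^ 2)⁻¹ •
        vecMulVec (leastSquaresResidual (X.submatrix id Fin.succ) (X.col 0))
          (leastSquaresResidual (X.submatrix id Fin.succ) (X.col 0)) := by
  set X' := X.submatrix id Fin.succ
  set φ := leastSquares X' (X.col 0)
  set r := leastSquaresResidual X' (X.col 0)
  set c := (∑ t, r t ^ 2)⁻¹
  -- `P` is symmetric, fixes `X'` and `y = X'φ + r`, and its columns lie in the span of those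
  -- of `X`; hence it is the hat matrix of `X`.
  set P := hatMatrix X' + c • vecMulVec r r
  have hX' : LinearIndependent ℝ X'.col := linearIndependent_col_submatrix_succ hX
  have hr : X'ᵀ *ᵥ r = 0 := transpose_mulVec_leastSquaresResidual hX' _
  have hPX' : P * X' = X' := by
    rw [Matrix.add_mul, hatMatrix_mul_self hX', Matrix.smul_mul, vecMulVec_mul,
      ← mulVec_transpose, hr]
    ext
    simp [vecMulVec_apply]
  have hPr : P *ᵥ r = r := by
    have hcr : c * (r ⬝ᵥ r) = 1 := by
      rw [show r ⬝ᵥ r = ∑ t, r t ^ 2 by simp only [dotProduct, sq]]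
      exact inv_mul_cancel₀ (sum_sq_leastSquaresResidual_pos hX).ne'
    rw [add_mulVec, hatMatrix, ← mulVec_mulVec, hr, mulVec_zero, zero_add, smul_mulVec,
      vecMulVec_mulVec]
    simp [smul_smul, hcr]
  have hPy : P *ᵥ X.col 0 = X.col 0 := by
    have hy : X.col 0 = X' *ᵥ φ + r := by simp [r, φ, leastSquaresResidual]
    rw [hy, mulVec_add, mulVec_mulVec, hPX', hPr]
  have hXE : X * (1 : Matrix (Fin (k + 1)) (Fin (k + 1)) ℝ).submatrix id Fin.succ = X' := by
    ext i j
    simp [X', mul_apply, one_apply]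
  refine hatMatrix_eq_of_mul_eq hX
    (N := (1 : Matrix (Fin (k + 1)) (Fin (k + 1)) ℝ).submatrix id Fin.succ * (X'ᵀ * X')⁻¹ * X'ᵀ
      + c • vecMulVec (Fin.cons 1 (-φ)) r) ?_ ?_ ?_
  · rw [transpose_add, transpose_smul, hatMatrix_transpose, transpose_vecMulVec]
  · ext i k
    refine Fin.cases ?_ (fun j => ?_) k
    · exact congrFun hPy i
    · exact congrFun (congrFun hPX' i) j
  · rw [Matrix.mul_add, Matrix.mul_smul, mul_vecMulVec, ← col_zero_sub_submatrix_succ_mulVec,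
      ← Matrix.mul_assoc, ← Matrix.mul_assoc, hXE]
    rfl

lemma hatMatrix_apply_self_eq_add (i : ι) :
    hatMatrix X i i = hatMatrix (X.submatrix id Fin.succ) i i +
      leastSquaresResidual (X.submatrix id Fin.succ) (X.col 0) i ^ 2 /
        ∑ t, leastSquaresResidual (X.submatrix id Fin.succ) (X.col 0) t ^ 2 := by
  rw [hatMatrix_eq_hatMatrix_submatrix_succ_add hX, add_apply, smul_apply, vecMulVec_apply,
    smul_eq_mul, ← sq, inv_mul_eq_div]

end LeverageRecursion
end Matrix

lemma le_sq_mul_of_sqrt_le_mul_sqrt {x y c : ℝ} (hx : 0 ≤ x) (hy : 0 ≤ y) (h : √x ≤ c * √y) :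
    x ≤ c ^ 2 * y :=
  calc x = √x ^ 2 := (Real.sq_sqrt hx).symm
    _ ≤ (c * √y) ^ 2 := pow_le_pow_left₀ (Real.sqrt_nonneg x) h 2
    _ = c ^ 2 * y := by rw [mul_pow, Real.sq_sqrt hy]

lemma one_sub_mul_one_add_sq_sq_le_one {s : ℝ} (hs : 0 ≤ s) : (1 - s) * (1 + s ^ 2) ^ 2 ≤ 1 := by
  nlinarith [mul_nonneg hs (sq_nonneg (s - 1 / 2)), mul_nonneg hs (sq_nonneg (s * (s - 1 / 2))),
    mul_nonneg hs hs]

lemma sub_le_sqrt_mul_of_sqrt_le {R T ε : ℝ} (hR : 0 ≤ R) (hT : 0 ≤ T)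
    (h : √T ≤ (1 + ε) * √R) : T - R ≤ √ε * T := by
  set s := √ε
  have hs : 0 ≤ s := Real.sqrt_nonneg ε
  have hε : ε ≤ s ^ 2 := Real.sq_sqrt' ▸ le_max_left ε 0
  have hTR : T ≤ (1 + s ^ 2) ^ 2 * R :=
    le_sq_mul_of_sqrt_le_mul_sqrt hT hR (h.trans (by gcongr))
  rcases le_or_gt s 1 with hs1 | hs1
  · nlinarith [one_sub_mul_one_add_sq_sq_le_one hs,
      mul_le_mul_of_nonneg_left hTR (sub_nonneg.mpr hs1)]
  · nlinarith

lemma abs_sq_sub_sq_le {a b c δ : ℝ} (ha : a ^ 2 ≤ c) (hb : b ^ 2 ≤ c)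
    (hab : (b - a) ^ 2 ≤ δ ^ 2 * c) (hδ : 0 ≤ δ) : |a ^ 2 - b ^ 2| ≤ 2 * δ * c := by
  have hc : 0 ≤ c := (sq_nonneg a).trans ha
  refine abs_le_of_sq_le_sq ?_ (by positivity)
  calc (a ^ 2 - b ^ 2) ^ 2 = (b - a) ^ 2 * (a + b) ^ 2 := by ring
    _ ≤ (δ ^ 2 * c) * (4 * c) :=
        mul_le_mul hab (by nlinarith [sq_nonneg (a - b)]) (sq_nonneg _) (by positivity)
    _ = (2 * δ * c) ^ 2 := by ring

lemma abs_sq_div_sub_sq_div_le {a b R T ℓ s δ : ℝ} (hR : 0 < R) (hRT : R ≤ T)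
    (hTR : T - R ≤ s * T) (ha : a ^ 2 ≤ ℓ * R) (hb : b ^ 2 ≤ ℓ * T)
    (hab : (b - a) ^ 2 ≤ δ ^ 2 * (ℓ * T)) (hδ : 0 ≤ δ) :
    |a ^ 2 / R - b ^ 2 / T| ≤ (s + 2 * δ) * ℓ := by
  have hT : 0 < T := hR.trans_le hRT
  have haR : a ^ 2 / R ≤ ℓ := (div_le_iff₀ hR).mpr ha
  have hfirst : |a ^ 2 / R * ((T - R) / T)| ≤ ℓ * s := by
    rw [abs_of_nonneg (by have := sub_nonneg.mpr hRT; positivity)]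
    exact mul_le_mul haR ((div_le_iff₀ hT).mpr hTR) (by have := sub_nonneg.mpr hRT; positivity)
      ((div_nonneg (sq_nonneg a) hR.le).trans haR)
  have hsecond : |(a ^ 2 - b ^ 2) / T| ≤ 2 * δ * ℓ := by
    rw [abs_div, abs_of_pos hT, div_le_iff₀ hT, mul_assoc]
    exact abs_sq_sub_sq_le (ha.trans (by nlinarith)) hb hab hδ
  calc |a ^ 2 / R - b ^ 2 / T| = |a ^ 2 / R * ((T - R) / T) + (a ^ 2 - b ^ 2) / T| := by
        congr 1; field_simp; ring
    _ ≤ ℓ * s + 2 * δ * ℓ := (abs_add_le _ _).trans (add_le_add hfirst hsecond)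
    _ = (s + 2 * δ) * ℓ := by ring

theorem quasi_approximate_leverage_relative_error_general {m d : ℕ}
    (X : Matrix (Fin m) (Fin (d + 1)) ℝ) (hX : X.rank = d + 1)
    (hH : (Xᵀ * X).IsHermitian) (ε η : ℝ) (hη : 0 ≤ η)
    (φt : Fin d → ℝ) :
    let y : Fin m → ℝ := fun i => X i 0
    let X' : Matrix (Fin m) (Fin d) ℝ := Matrix.of fun i j => X i j.succ
    let φ := (X'ᵀ * X')⁻¹ *ᵥ (X'ᵀ *ᵥ y)
    let r := y - X' *ᵥ φ
    let rt := y - X' *ᵥ φt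
    let κ := Real.sqrt ((⨆ j, hH.eigenvalues j) / (⨅ j, hH.eigenvalues j))
    Real.sqrt (∑ i, rt i ^ 2) ≤ (1 + ε) * Real.sqrt (∑ i, r i ^ 2) →
    Real.sqrt (∑ j, (φ j - φt j) ^ 2) ≤ Real.sqrt ε * η * Real.sqrt (∑ j, φ j ^ 2) →
    ∀ i, |(X * (Xᵀ * X)⁻¹ * Xᵀ) i i -
        ((X' * (X'ᵀ * X')⁻¹ * X'ᵀ) i i + rt i ^ 2 / ∑ t, rt t ^ 2)| ≤
      (1 + 3 * η * κ ^ 2) * Real.sqrt ε * (X * (Xᵀ * X)⁻¹ * Xᵀ) i i := by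
  intro y X' φ r rt κ h1 h2 i
  change |hatMatrix X i i - (hatMatrix X' i i + _)| ≤ _ * hatMatrix X i i
  have hXc : LinearIndependent ℝ X.col := linearIndependent_col_of_rank_eq (by simpa using hX)
  have hpd := posDef_transpose_mul_self hXc
  have hκ : κ ^ 2 = hH.conditionNumber :=
    Real.sq_sqrt (zero_le_one.trans hpd.one_le_conditionNumber)
  have hκ1 : 1 ≤ κ := Real.one_le_sqrt.mpr hpd.one_le_conditionNumber
  have hR : 0 < ∑ t, r t ^ 2 := sum_sq_leastSquaresResidual_pos hXc
  have hRT : ∑ t, r t ^ 2 ≤ ∑ t, rt t ^ 2 :=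
    sum_sq_leastSquaresResidual_le (linearIndependent_col_submatrix_succ hXc) _ _
  have hΔ : ∑ t, (X' *ᵥ (φ - φt)) t ^ 2 ≤ κ ^ 2 * (√ε * η) ^ 2 * ∑ t, r t ^ 2 :=
    hκ ▸ sum_sq_submatrix_succ_mulVec_le_of_sum_sq_le hXc hH (w := φ - φt)
      (le_sq_mul_of_sqrt_le_mul_sqrt (by positivity) (by positivity) h2)
  have hℓ := hatMatrix_apply_self_nonneg hXc i
  have hab : (rt i - r i) ^ 2 ≤ (κ * √ε * η) ^ 2 * (hatMatrix X i i * ∑ t, rt t ^ 2) := by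
    have hdiff : rt i - r i = (X' *ᵥ (φ - φt)) i := by simp [rt, r, mulVec_sub]
    rw [hdiff, mul_left_comm, mul_assoc κ, mul_pow]
    exact (sq_submatrix_succ_mulVec_apply_le hXc _ i).trans
      (mul_le_mul_of_nonneg_left (hΔ.trans (by gcongr)) hℓ)
  have hrec : hatMatrix X i i = hatMatrix X' i i + r i ^ 2 / ∑ t, r t ^ 2 :=
    hatMatrix_apply_self_eq_add hXc i
  calc _ = |r i ^ 2 / ∑ t, r t ^ 2 - rt i ^ 2 / ∑ t, rt t ^ 2| := by
        rw [hrec, add_sub_add_left_eq_sub]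
    _ ≤ (√ε + 2 * (κ * √ε * η)) * hatMatrix X i i :=
        abs_sq_div_sub_sq_div_le hR hRT (sub_le_sqrt_mul_of_sqrt_le hR.le (by positivity) h1)
          (sq_col_zero_sub_submatrix_succ_mulVec_apply_le hXc φ i)
          (sq_col_zero_sub_submatrix_succ_mulVec_apply_le hXc φt i) hab (by positivity)
    _ ≤ (1 + 3 * η * κ ^ 2) * √ε * hatMatrix X i i := by
        have := mul_nonneg (mul_nonneg (mul_nonneg (Real.sqrt_nonneg ε) hη) hℓ)
          (show 0 ≤ κ * (3 * κ - 2) by nlinarith)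
        nlinarith

/-- Relative error bound for quasi-approximate leverage scores (deterministic form). -/
theorem quasi_approximate_leverage_relative_error {m d : ℕ}
    (X : Matrix (Fin m) (Fin (d + 1)) ℝ) (hX : X.rank = d + 1)
    (hH : (Xᵀ * X).IsHermitian) (ε η : ℝ) (hε0 : 0 < ε) (hε1 : ε < 1) (hη : 0 ≤ η)
    (φt : Fin d → ℝ) :
    let y : Fin m → ℝ := fun i => X i 0
    let X' : Matrix (Fin m) (Fin d) ℝ := Matrix.of fun i j => X i j.succ
    let φ := (X'ᵀ * X')⁻¹ *ᵥ (X'ᵀ *ᵥ y)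
    let r := y - X' *ᵥ φ
    let rt := y - X' *ᵥ φt
    let κ := Real.sqrt ((⨆ j, hH.eigenvalues j) / (⨅ j, hH.eigenvalues j))
    Real.sqrt (∑ i, rt i ^ 2) ≤ (1 + ε) * Real.sqrt (∑ i, r i ^ 2) →
    Real.sqrt (∑ j, (φ j - φt j) ^ 2) ≤ Real.sqrt ε * η * Real.sqrt (∑ j, φ j ^ 2) →
    ∀ i, |(X * (Xᵀ * X)⁻¹ * Xᵀ) i i -
        ((X' * (X'ᵀ * X')⁻¹ * X'ᵀ) i i + rt i ^ 2 / ∑ t, rt t ^ 2)| ≤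
      (1 + 3 * η * κ ^ 2) * Real.sqrt ε * (X * (Xᵀ * X)⁻¹ * Xᵀ) i i :=
  quasi_approximate_leverage_relative_error_general X hX hH ε η hη φt
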